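/- arXiv:2005.00888 — 2 statements merged into one kernel-verified Lean document; each statement's English description precedes it below -/
import Mathlib

section
/- Let A be a commutative ℚ-algebra with a derivation δ, extended coefficientwise to A[[t]], and let ev : A[[t]] → A be evaluation at 0. Then T^{ev}_{δ + d/dt} is a differential ring homomorphism from (A[[t]], δ + d/dt) to (A[[t]], d/dt), i.e., T^{ev}_{δ + d/dt} ∘ (δ + d/dt) = (d/dt) ∘ T^{ev}_{δ + d/dt}. -/
/-- The coefficientwise extension of a map `δ : A → A` to `A[[t]]`. -/
noncomputable def coeffwiseDer {A : Type*} [CommRing A] (δ : A → A) :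
    PowerSeries A → PowerSeries A :=
  fun f => PowerSeries.mk fun n => δ (PowerSeries.coeff n f)

/-- The Taylor map `T^{ev}_D(f) = Σ_k ev(D^k f)/k! · t^k` of the evaluation map
`ev : A[[t]] → A` at `0`, for a map `D` on `A[[t]]`. -/
noncomputable def taylorEv {A : Type*} [CommRing A] [Algebra ℚ A]
    (D : PowerSeries A → PowerSeries A) : PowerSeries A → PowerSeries A :=
  fun f => PowerSeries.mk fun k =>
    (k.factorial : ℚ)⁻¹ • PowerSeries.constantCoeff (D^[k] f)

/-!
Comparing `k`-th coefficients, `T_D (D f)` has `ev (D^(k+1) f) / k!` and `(T_D f)'` has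
`(k + 1) · ev (D^(k+1) f) / (k+1)!`. These agree for an arbitrary map `D` on `A[[t]]`.
-/

open PowerSeries

theorem Nat.inv_factorial_succ_mul_succ (k : ℕ) :
    ((k + 1).factorial : ℚ)⁻¹ * (k + 1) = (k.factorial : ℚ)⁻¹ := by
  rw [Nat.factorial_succ, Nat.cast_mul, Nat.cast_succ, mul_inv, mul_comm, ← mul_assoc,
    mul_inv_cancel₀ (by positivity), one_mul]

section Taylor

variable {A : Type*} [CommRing A] [Algebra ℚ A]

theorem coeff_taylorEv (D : A⟦X⟧ → A⟦X⟧) (f : A⟦X⟧) (k : ℕ) :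
    coeff k (taylorEv D f) = (k.factorial : ℚ)⁻¹ • constantCoeff (D^[k] f) :=
  coeff_mk _ _

theorem taylorEv_apply_self (D : A⟦X⟧ → A⟦X⟧) (f : A⟦X⟧) :
    taylorEv D (D f) = derivative A (taylorEv D f) := by
  ext k
  rw [coeff_derivative, coeff_taylorEv, coeff_taylorEv, ← Function.iterate_succ_apply,
    smul_mul_assoc, ← Nat.cast_succ, mul_comm, ← nsmul_eq_mul, ← Nat.cast_smul_eq_nsmul ℚ,
    smul_smul, Nat.cast_succ, Nat.inv_factorial_succ_mul_succ]

end Taylor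

/-- `T^{ev}_{δ + d/dt}` is a differential ring homomorphism
`(A[[t]], δ + d/dt) → (A[[t]], d/dt)`. -/
theorem taylorEv_is_differential {A : Type*} [CommRing A] [Algebra ℚ A]
    (δ : Derivation ℤ A A) :
    ∀ f : PowerSeries A,
      taylorEv (fun g => coeffwiseDer (⇑δ) g + PowerSeries.derivativeFun g)
          (coeffwiseDer (⇑δ) f + PowerSeries.derivativeFun f) =
        PowerSeries.derivativeFun
          (taylorEv (fun g => coeffwiseDer (⇑δ) g + PowerSeries.derivativeFun g) f) :=
  taylorEv_apply_self _
end

section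
/- Let A be a commutative ℚ-algebra and let δ, ∂ be commuting derivations on A, extended coefficientwise to A[[t]], and let ev : A[[t]] → A be evaluation at 0. Then T^{ev}_{δ + ∂ + d/dt} = T^{ev}_{δ + d/dt} ∘ T^{ev}_{∂ + d/dt} as maps A[[t]] → A[[t]]. -/
/-!
For an additive map `φ` acting coefficientwise, `φ` commutes with `d/dt`, so the binomial
theorem expands `(φ + d/dt)^k`; at `t = 0` the term `φ^j (d/dt)^i f` contributes `i! φ^j(f_i)`.
Hence `T^{ev}_{φ + d/dt} f = exp(tφ) f`, and the theorem becomes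
`exp(t(δ + ∂)) = exp(tδ) exp(t∂)`, which holds because `δ` and `∂` commute.
-/

open Finset PowerSeries

lemma Finset.Nat.sum_antidiagonal_antidiagonal_assoc {M : Type*} [AddCommMonoid M]
    (g : ℕ → ℕ → ℕ → M) (n : ℕ) :
    ∑ p ∈ antidiagonal n, ∑ q ∈ antidiagonal p.1, g q.1 q.2 p.2 =
      ∑ p ∈ antidiagonal n, ∑ q ∈ antidiagonal p.2, g p.1 q.1 q.2 := by
  simp only [Finset.sum_sigma']
  apply Finset.sum_nbij' (fun ⟨⟨_, l⟩, ⟨j, i⟩⟩ ↦ ⟨(j, i + l), (i, l)⟩)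
    (fun ⟨⟨j, _⟩, ⟨i, l⟩⟩ ↦ ⟨(j + i, l), (j, i)⟩) <;> aesop (add simp add_assoc)

lemma inv_factorial_smul_choose_smul {M : Type*} [AddCommGroup M] [Module ℚ M]
    (j i : ℕ) (x : M) :
    (((j + i).factorial : ℚ)⁻¹ • ((j + i).choose j • x)) =
      (j.factorial : ℚ)⁻¹ • (i.factorial : ℚ)⁻¹ • x := by
  rw [← Nat.cast_smul_eq_nsmul ℚ, smul_smul, smul_smul]
  congr 1
  have h : ((j + i).choose j * j.factorial * i.factorial : ℚ) = (j + i).factorial := by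
    rw [Nat.choose_symm_add]; exact_mod_cast Nat.add_choose_mul_factorial_mul_factorial j i
  field_simp
  linear_combination h

section ExpAct
variable {A : Type*} [Ring A] [Module ℚ A]

/-- `expAct φ f = exp(t φ) f`, with `φ` acting coefficientwise on `f ∈ A⟦X⟧`. -/
noncomputable def expAct (φ : Module.End ℤ A) (f : A⟦X⟧) : A⟦X⟧ :=
  mk fun n => ∑ p ∈ antidiagonal n, (p.1.factorial : ℚ)⁻¹ • (φ ^ p.1) (coeff p.2 f)

lemma coeff_expAct (φ : Module.End ℤ A) (f : A⟦X⟧) (n : ℕ) :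
    coeff n (expAct φ f) =
      ∑ p ∈ antidiagonal n, (p.1.factorial : ℚ)⁻¹ • (φ ^ p.1) (coeff p.2 f) :=
  coeff_mk _ _

lemma expAct_add {φ ψ : Module.End ℤ A} (h : Commute φ ψ) (f : A⟦X⟧) :
    expAct (φ + ψ) f = expAct φ (expAct ψ f) := by
  ext n
  have binomial : ∀ k l : ℕ, (k.factorial : ℚ)⁻¹ • ((φ + ψ) ^ k) (coeff l f) =
      ∑ q ∈ antidiagonal k,
        (q.1.factorial : ℚ)⁻¹ • (q.2.factorial : ℚ)⁻¹ •
          (φ ^ q.1) ((ψ ^ q.2) (coeff l f)) := by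
    intro k l
    rw [h.add_pow', LinearMap.coe_sum, Finset.sum_apply, smul_sum]
    refine sum_congr rfl fun q hq => ?_
    rw [← mem_antidiagonal.mp hq, LinearMap.smul_apply, Module.End.mul_apply,
      inv_factorial_smul_choose_smul]
  simp only [coeff_expAct, binomial, map_sum, map_rat_smul, smul_sum]
  exact Finset.Nat.sum_antidiagonal_antidiagonal_assoc (fun j i l =>
    (j.factorial : ℚ)⁻¹ • (i.factorial : ℚ)⁻¹ • (φ ^ j) ((ψ ^ i) (coeff l f))) n

end ExpAct

section Coeffwise
variable {A : Type*} [CommRing A]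

lemma coeff_coeffwiseDer (φ : A → A) (f : A⟦X⟧) (n : ℕ) :
    coeff n (coeffwiseDer φ f) = φ (coeff n f) :=
  coeff_mk _ _

noncomputable def coeffwiseEnd (φ : Module.End ℤ A) : Module.End ℤ A⟦X⟧ where
  toFun := coeffwiseDer φ
  map_add' f g := by ext; simp [coeff_coeffwiseDer]
  map_smul' c f := by
    ext n
    change coeff n (coeffwiseDer φ (c • f)) = coeff n (c • coeffwiseDer φ f)
    rw [map_zsmul, coeff_coeffwiseDer, coeff_coeffwiseDer, map_zsmul, map_zsmul]

lemma coeff_coeffwiseEnd_pow (φ : Module.End ℤ A) (j : ℕ) (f : A⟦X⟧) (n : ℕ) :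
    coeff n ((coeffwiseEnd φ ^ j) f) = (φ ^ j) (coeff n f) := by
  induction j with
  | zero => rfl
  | succ j ih =>
    rw [pow_succ', Module.End.mul_apply, pow_succ', Module.End.mul_apply, ← ih]
    exact coeff_coeffwiseDer _ _ _

variable (A) in
noncomputable def derivativeEnd : Module.End ℤ A⟦X⟧ :=
  (d⁄dX A).toLinearMap.restrictScalars ℤ

lemma derivativeEnd_pow_apply (i : ℕ) (f : A⟦X⟧) :
    (derivativeEnd A ^ i) f = (d⁄dX A)^[i] f := by
  rw [Module.End.coe_pow]
  rfl

lemma commute_coeffwiseEnd_derivativeEnd (φ : Module.End ℤ A) :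
    Commute (coeffwiseEnd φ) (derivativeEnd A) := by
  ext f n
  change coeff n (coeffwiseDer φ (d⁄dX A f)) = coeff n (d⁄dX A (coeffwiseDer φ f))
  simp only [coeff_coeffwiseDer, coeff_derivative]
  simpa [nsmul_eq_mul, mul_comm] using map_nsmul φ (n + 1) (coeff (n + 1) f)

lemma taylorEv_coeffwiseDer_add_derivative [Algebra ℚ A] (φ : Module.End ℤ A) (f : A⟦X⟧) :
    taylorEv (fun g => coeffwiseDer φ g + d⁄dX A g) f = expAct φ f := by
  ext k
  have hD : (fun g => coeffwiseDer φ g + d⁄dX A g) =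
      ⇑(coeffwiseEnd φ + derivativeEnd A) := rfl
  rw [taylorEv, coeff_mk, hD, ← Module.End.coe_pow,
    (commute_coeffwiseEnd_derivativeEnd φ).add_pow', LinearMap.coe_sum, Finset.sum_apply,
    map_sum, smul_sum, coeff_expAct]
  refine sum_congr rfl fun q hq => ?_
  rw [← mem_antidiagonal.mp hq, LinearMap.smul_apply, map_nsmul, Module.End.mul_apply,
    ← coeff_zero_eq_constantCoeff_apply, coeff_coeffwiseEnd_pow,
    coeff_zero_eq_constantCoeff_apply,
    derivativeEnd_pow_apply, constantCoeff_iterate_derivative, ← nsmul_eq_mul, map_nsmul,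
    inv_factorial_smul_choose_smul, ← Nat.cast_smul_eq_nsmul ℚ,
    inv_smul_smul₀ (Nat.cast_ne_zero.mpr q.2.factorial_ne_zero)]

end Coeffwise

/-- For commuting derivations `δ, ∂` on a ℚ-algebra `A`,
`T^{ev}_{δ + ∂ + d/dt} = T^{ev}_{δ + d/dt} ∘ T^{ev}_{∂ + d/dt}`. -/
theorem taylorEv_comp {A : Type*} [CommRing A] [Algebra ℚ A]
    (δ d : Derivation ℤ A A) (hcomm : ∀ a : A, δ (d a) = d (δ a)) :
    ∀ f : PowerSeries A,
      taylorEv (fun g => coeffwiseDer (fun a => δ a + d a) g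
          + PowerSeries.derivativeFun g) f =
        taylorEv (fun g => coeffwiseDer (⇑δ) g + PowerSeries.derivativeFun g)
          (taylorEv (fun g => coeffwiseDer (⇑d) g + PowerSeries.derivativeFun g) f) := by
  intro f
  have hcommEnd : Commute (δ : Module.End ℤ A) d := LinearMap.ext hcomm
  calc _ = expAct ((δ : Module.End ℤ A) + (d : Module.End ℤ A)) f :=
        taylorEv_coeffwiseDer_add_derivative _ f
    _ = expAct (δ : Module.End ℤ A) (expAct (d : Module.End ℤ A) f) := expAct_add hcommEnd f
    _ = _ := by
      rw [← taylorEv_coeffwiseDer_add_derivative, ← taylorEv_coeffwiseDer_add_derivative]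
      rfl
end
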